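/- arXiv:1805.03238 — 2 statements merged into one kernel-verified Lean document; each statement's English description precedes it below -/
import Mathlib

section
/- Let F_q have characteristic p and let k ≥ 1. For each 1 ≤ i ≤ k set t_i = min{t ∈ Z_{≥0} : p^t ≥ ⌊k/i⌋}. Then for every 1 ≤ i ≤ k, every 0 ≤ j ≤ t_i, and every divisor d of q^i - 1, there is a polynomial f ∈ F_q[x] of degree at most k with f(0) ≠ 0 and ord(f) = p^j · d. -/
/-!
Take an element `ζ` of order `d` in the cyclic group of units of the degree-`i` extension of
`F`; its minimal polynomial `m` has degree at most `i` and `m ∣ X ^ n - 1 ↔ d ∣ n`. Writing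
`n = p ^ a * u` with `p ∤ u`, we have `X ^ n - 1 = (X ^ u - 1) ^ p ^ a` with `X ^ u - 1`
squarefree, so `m ^ s ∣ X ^ n - 1` exactly when `d ∣ u` and `s ≤ p ^ a`: the order of `m ^ s` is
`p ^ clog p s * d`. Choosing `s = min ⌊k / i⌋ (p ^ j)` gives `clog p s = j` and `deg m ^ s ≤ k`.
-/

open Polynomial

section OrderOfPolynomial

variable {R : Type*} [CommRing R]

theorem isLeast_of_forall_dvd_X_pow_sub_one_iff {f : R[X]} {e : ℕ} (he : 0 < e)
    (h : ∀ n, f ∣ X ^ n - 1 ↔ e ∣ n) : IsLeast {n : ℕ | 0 < n ∧ f ∣ X ^ n - 1} e :=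
  ⟨⟨he, (h e).2 dvd_rfl⟩, fun _ ⟨hn, hf⟩ => Nat.le_of_dvd hn ((h _).1 hf)⟩

theorem eval_zero_ne_zero_of_dvd_X_pow_sub_one [Nontrivial R] {f : R[X]} {n : ℕ} (hn : n ≠ 0)
    (h : f ∣ X ^ n - 1) : f.eval 0 ≠ 0 := by
  intro h0
  simpa [h0, hn] using eval_dvd (x := 0) h

theorem X_pow_char_pow_mul_sub_one (p : ℕ) [Fact p.Prime] [CharP R p] (a u : ℕ) :
    (X : R[X]) ^ (p ^ a * u) - 1 = (X ^ u - 1) ^ p ^ a := by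
  rw [sub_pow_char_pow, ← pow_mul, one_pow, mul_comm]

end OrderOfPolynomial

theorem le_of_pow_dvd_pow_of_squarefree {M : Type*} [CommMonoidWithZero M]
    [UniqueFactorizationMonoid M] {m g : M} (hg : Squarefree g) (hm : ¬IsUnit m) (hmg : m ∣ g)
    {s N : ℕ} (h : m ^ s ∣ g ^ N) : s ≤ N := by
  have : Nontrivial M := ⟨⟨m, 1, fun h => hm (h ▸ isUnit_one)⟩⟩
  obtain ⟨r, hr, hrm⟩ :=
    WfDvdMonoid.exists_irreducible_factor hm (ne_zero_of_dvd_ne_zero hg.ne_zero hmg)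
  obtain ⟨g', rfl⟩ := hrm.trans hmg
  by_contra! hNs
  have hdvd : r ^ (N + 1) ∣ r ^ N * g' ^ N := by
    rw [← mul_pow]
    exact (pow_dvd_pow r hNs).trans ((pow_dvd_pow_of_dvd hrm s).trans h)
  rw [pow_succ, mul_dvd_mul_iff_left (pow_ne_zero _ hr.ne_zero)] at hdvd
  exact hr.not_isUnit (hg r (mul_dvd_mul_left r (hr.prime.dvd_of_dvd_pow hdvd)))

section CharP

variable {F : Type*} [Field F] {p : ℕ} [Fact p.Prime] [CharP F p]

theorem pow_dvd_X_pow_sub_one_iff {m : F[X]} {d : ℕ} (hm : ¬IsUnit m) (hpd : ¬p ∣ d)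
    (hmd : ∀ n, m ∣ X ^ n - 1 ↔ d ∣ n) {s : ℕ} (hs : 0 < s) (n : ℕ) :
    m ^ s ∣ X ^ n - 1 ↔ p ^ Nat.clog p s * d ∣ n := by
  have hp : p.Prime := Fact.out
  constructor
  · intro h
    rcases eq_or_ne n 0 with rfl | hn
    · exact dvd_zero _
    obtain ⟨a, u, hpu, rfl⟩ := Nat.exists_eq_pow_mul_and_not_dvd hn p hp.ne_one
    have hdn : d ∣ p ^ a * u := (hmd _).1 ((dvd_pow_self m hs.ne').trans h)
    have hdu : d ∣ u :=
      (Nat.Coprime.pow_right a ((hp.coprime_iff_not_dvd.2 hpd).symm)).dvd_of_dvd_mul_left hdn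
    have hsq : Squarefree ((X : F[X]) ^ u - 1) :=
      (X_pow_sub_one_separable_iff.2 (by rwa [Ne, CharP.cast_eq_zero_iff F p])).squarefree
    have hsa : s ≤ p ^ a := le_of_pow_dvd_pow_of_squarefree hsq hm ((hmd u).2 hdu)
      (X_pow_char_pow_mul_sub_one (R := F) p a u ▸ h)
    exact mul_dvd_mul (pow_dvd_pow p ((Nat.clog_le_iff_le_pow hp.one_lt).2 hsa)) hdu
  · rintro ⟨r, rfl⟩
    rw [mul_assoc, X_pow_char_pow_mul_sub_one p]
    exact (pow_dvd_pow m (Nat.le_pow_clog hp.one_lt s)).trans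
      (pow_dvd_pow_of_dvd ((hmd _).2 (dvd_mul_right d r)) _)

end CharP

theorem minpoly_dvd_X_pow_sub_one_iff {K E : Type*} [Field K] [Ring E] [Algebra K E] (x : E)
    (n : ℕ) : minpoly K x ∣ X ^ n - 1 ↔ orderOf x ∣ n := by
  rw [minpoly.dvd_iff, orderOf_dvd_iff_pow_eq_one]
  simp [sub_eq_zero]

theorem exists_dvd_X_pow_sub_one_iff_of_dvd_card_pow_sub_one {F : Type*} [Field F] [Fintype F]
    {i d : ℕ} (hi : i ≠ 0) (hd : d ∣ Fintype.card F ^ i - 1) :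
    ∃ m : F[X], ¬IsUnit m ∧ m.natDegree ≤ i ∧ ∀ n, m ∣ X ^ n - 1 ↔ d ∣ n := by
  obtain ⟨p, _⟩ := CharP.exists F
  have : Fact p.Prime := ⟨CharP.char_is_prime F p⟩
  have : NeZero i := ⟨hi⟩
  let E := FiniteField.Extension F p i
  obtain ⟨g, hg⟩ := IsCyclic.exists_ofOrder_eq_natCard (α := Eˣ)
  have hdg : d ∣ orderOf g := by
    rwa [hg, Nat.card_units, FiniteField.natCard_extension, Nat.card_eq_fintype_card]
  let ζ : E := ↑(g ^ (orderOf g / d))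
  have hζ : orderOf ζ = d := by
    rw [orderOf_units, orderOf_pow_orderOf_div (hg ▸ Nat.card_pos.ne') hdg]
  refine ⟨minpoly F ζ, minpoly.not_isUnit F ζ,
    (minpoly.natDegree_le ζ).trans_eq (FiniteField.finrank_extension F p i), fun n => ?_⟩
  rw [minpoly_dvd_X_pow_sub_one_iff, hζ]

theorem not_dvd_of_dvd_card_pow_sub_one {F : Type*} [Field F] [Fintype F] {p : ℕ} [CharP F p]
    {i d : ℕ} (hi : i ≠ 0) (hd : d ∣ Fintype.card F ^ i - 1) : ¬p ∣ d := by
  intro hpd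
  have hpq : p ∣ Fintype.card F ^ i := (CharP.cast_eq_zero_iff F p _).1 (by
    rw [Nat.cast_pow, FiniteField.cast_card_eq_zero, zero_pow hi])
  have hq : 0 < Fintype.card F ^ i := pow_pos Fintype.card_pos i
  exact (CharP.char_is_prime F p).one_lt.ne' (Nat.dvd_one.1 (by
    simpa [Nat.sub_sub_self hq] using Nat.dvd_sub hpq (hpd.trans hd)))

theorem stmt_16_general {F : Type*} [Field F] [Fintype F] (k : ℕ) :
    ∀ i : ℕ, 1 ≤ i → i ≤ k →
    ∀ t_i : ℕ, IsLeast {t : ℕ | k / i ≤ (ringChar F) ^ t} t_i →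
    ∀ j : ℕ, j ≤ t_i →
    ∀ d : ℕ, d ∣ Fintype.card F ^ i - 1 →
      ∃ f : Polynomial F, f.natDegree ≤ k ∧ f.eval 0 ≠ 0 ∧
        IsLeast {n : ℕ | 0 < n ∧ f ∣ Polynomial.X ^ n - 1}
          ((ringChar F) ^ j * d) := by
  intro i hi hik t_i ht j hj d hd
  set p := ringChar F
  have hp : p.Prime := CharP.char_is_prime F p
  have : Fact p.Prime := ⟨hp⟩
  have hpd : ¬p ∣ d := not_dvd_of_dvd_card_pow_sub_one (by omega) hd
  obtain ⟨m, hm, hdeg, hmd⟩ := exists_dvd_X_pow_sub_one_iff_of_dvd_card_pow_sub_one (by omega) hd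
  set s := min (k / i) (p ^ j)
  have hs : 0 < s := lt_min (Nat.div_pos hik hi) (pow_pos hp.pos j)
  have hclog : Nat.clog p s = j := by
    rw [(Nat.clog_monotone p).map_min, Nat.clog_pow p j hp.one_lt]
    exact min_eq_right (hj.trans (ht.2 (Nat.le_pow_clog hp.one_lt _)))
  have hms : ∀ n, m ^ s ∣ X ^ n - 1 ↔ p ^ j * d ∣ n :=
    hclog ▸ pow_dvd_X_pow_sub_one_iff hm hpd hmd hs
  have he : 0 < p ^ j * d :=
    Nat.mul_pos (pow_pos hp.pos j) (Nat.pos_of_ne_zero (by rintro rfl; exact hpd (dvd_zero p)))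
  refine ⟨m ^ s, ?_, eval_zero_ne_zero_of_dvd_X_pow_sub_one he.ne' ((hms _).2 dvd_rfl),
    isLeast_of_forall_dvd_X_pow_sub_one_iff he hms⟩
  calc (m ^ s).natDegree ≤ s * i := natDegree_pow_le.trans (Nat.mul_le_mul_left s hdeg)
    _ ≤ k / i * i := Nat.mul_le_mul_right i (min_le_left _ _)
    _ ≤ k := Nat.div_mul_le_self k i

/-- Containment `⋃_{i=1}^k {p^j : 0 ≤ j ≤ t_i} · D(q^i - 1) ⊆ O(k, F_q)`: for each
`1 ≤ i ≤ k`, `t_i` the least `t` with `p ^ t ≥ ⌊k / i⌋`, each `0 ≤ j ≤ t_i` and each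
divisor `d` of `q^i - 1`, there is a polynomial of degree at most `k` with nonzero
constant term and order `p ^ j * d`. -/
theorem stmt_16 {F : Type*} [Field F] [Fintype F] (k : ℕ) (hk : 1 ≤ k) :
    ∀ i : ℕ, 1 ≤ i → i ≤ k →
    ∀ t_i : ℕ, IsLeast {t : ℕ | k / i ≤ (ringChar F) ^ t} t_i →
    ∀ j : ℕ, j ≤ t_i →
    ∀ d : ℕ, d ∣ Fintype.card F ^ i - 1 →
      ∃ f : Polynomial F, f.natDegree ≤ k ∧ f.eval 0 ≠ 0 ∧
        IsLeast {n : ℕ | 0 < n ∧ f ∣ Polynomial.X ^ n - 1}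
          ((ringChar F) ^ j * d) :=
  stmt_16_general k
end

section
/- Let R = F_{q_1} ⊕ ... ⊕ F_{q_r} with r > 1 and let k ≥ 1. Then every sequence over R satisfying a degree-k linear recurrence with unit lowest coefficient has period at most ∏_{i=1}^r (q_i^k - 1), which is strictly less than |R|^k - 1; hence the maximum period |R|^k - 1 is achieved for some recurrence and initial state if and only if r = 1 (i.e., R is a field). -/
/-!
For a recurrence of order `k` with invertible lowest coefficient, the state vectors
`(a n, …, a (n + k - 1))` evolve under an injective map fixing `0`. Over a finite field `𝔽_q`
a nonzero initial state therefore lies on a cycle avoiding `0`, of length at most `q ^ k - 1`.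
Over `𝔽_{q₁} × ⋯ × 𝔽_{q_r}` the product of the componentwise periods is a common period, so the
least period is at most `∏ (q_i ^ k - 1)`, which is smaller than `∏ q_i ^ k - 1` once `r ≥ 2`.

Conversely, over `𝔽_q` let `α` generate `𝔽_{q^k}ˣ`: its minimal polynomial has degree `k`, and
`n ↦ Tr (α ^ n)` satisfies the associated recurrence. A period `m` with `α ^ m ≠ 1` would make
the trace vanish on every `α ^ n (α ^ m - 1)`, i.e. on all of `𝔽_{q^k}`; hence the least period
is the order `q ^ k - 1` of `α`.
-/

open Finset Function Polynomial IntermediateField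

theorem Function.Injective.minimalPeriod_le_card_sub_one {α : Type*} [Fintype α] {f : α → α}
    (hf : Injective f) {x y : α} (hy : IsFixedPt f y) (hxy : x ≠ y) :
    minimalPeriod f x ≤ Fintype.card α - 1 := by
  classical
  have hne : ∀ n, f^[n] x ≠ y := fun n h =>
    hxy (hf.iterate n (h.trans (iterate_fixed hy n).symm))
  have := card_le_card_of_injOn (f^[·] x) (s := range (minimalPeriod f x)) (t := univ.erase y)
    (fun n _ => by simp [hne]) (by simpa using iterate_injOn_Iio_minimalPeriod)
  simpa using this

namespace LinearRecurrence

section CommSemiring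

variable {R S : Type*} [CommSemiring R] [CommSemiring S] (E : LinearRecurrence R)

def map (φ : R →+* S) : LinearRecurrence S :=
  ⟨E.order, φ ∘ E.coeffs⟩

def state (a : ℕ → R) (n : ℕ) : Fin E.order → R :=
  fun i => a (n + i)

variable {E} {a : ℕ → R}

theorem tupleSucc_apply (X : Fin E.order → R) (i : Fin E.order) :
    E.tupleSucc X i =
      if h : (i : ℕ) + 1 < E.order then X ⟨i + 1, h⟩ else ∑ j, E.coeffs j * X j :=
  rfl

theorem IsSolution.map (φ : R →+* S) (ha : E.IsSolution a) : (E.map φ).IsSolution (φ ∘ a) :=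
  fun n => by simp only [LinearRecurrence.map, comp_apply, ha n, map_sum, map_mul]; rfl

theorem IsSolution.tupleSucc_state (ha : E.IsSolution a) (n : ℕ) :
    E.tupleSucc (E.state a n) = E.state a (n + 1) := by
  ext i
  by_cases h : (i : ℕ) + 1 < E.order
  · simp [tupleSucc_apply, state, h, add_assoc, add_comm 1]
  · rw [tupleSucc_apply, dif_neg h]
    simp only [state, ← ha n]
    congr 1
    omega

theorem IsSolution.iterate_tupleSucc (ha : E.IsSolution a) (n : ℕ) :
    E.tupleSucc^[n] (E.state a 0) = E.state a n := by
  induction n with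
  | zero => rfl
  | succ n ih => rw [iterate_succ_apply', ih, ha.tupleSucc_state]

end CommSemiring

section CommRing

variable {R : Type*} [CommRing R] {E : LinearRecurrence R} {a : ℕ → R}

theorem tupleSucc_injective (hE : 0 < E.order) (hc : IsUnit (E.coeffs ⟨0, hE⟩)) :
    Injective E.tupleSucc := by
  refine (injective_iff_map_eq_zero E.tupleSucc).mpr fun X hX => ?_
  have htail : ∀ i : Fin E.order, (i : ℕ) ≠ 0 → X i = 0 := by
    intro i hi
    have := congrFun hX ⟨i - 1, by omega⟩
    simpa [tupleSucc_apply, show (i : ℕ) - 1 + 1 < E.order by omega, Nat.sub_add_cancel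
      (Nat.pos_of_ne_zero hi)] using this
  have hsum := congrFun hX ⟨E.order - 1, by omega⟩
  rw [tupleSucc_apply, dif_neg (by simp; omega), Pi.zero_apply] at hsum
  rw [← add_sum_erase _ _ (mem_univ ⟨0, hE⟩), sum_eq_zero fun i hi => by
    rw [htail i fun h => (mem_erase.mp hi).1 (Fin.ext h), mul_zero], add_zero] at hsum
  funext i
  by_cases hi : (i : ℕ) = 0
  · obtain rfl : i = ⟨0, hE⟩ := Fin.ext hi
    exact (hc.mul_right_eq_zero).mp hsum
  · exact htail i hi

theorem IsSolution.exists_periodic_le [Fintype R] [Nontrivial R] (ha : E.IsSolution a)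
    (hE : 0 < E.order) (hc : IsUnit (E.coeffs ⟨0, hE⟩)) :
    ∃ m, 0 < m ∧ m ≤ Fintype.card R ^ E.order - 1 ∧ Periodic a m := by
  set f := E.tupleSucc
  have hf := tupleSucc_injective hE hc
  refine ⟨minimalPeriod f (E.state a 0),
    minimalPeriod_pos_of_mem_periodicPts (hf.mem_periodicPts _), ?_, fun n => ?_⟩
  · by_cases h0 : E.state a 0 = 0
    · have : 2 ≤ Fintype.card R ^ E.order :=
        Fintype.one_lt_card.trans_le (Nat.le_self_pow hE.ne' _)
      rw [h0, minimalPeriod_eq_one_iff_isFixedPt.mpr (map_zero f)]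
      omega
    · simpa using hf.minimalPeriod_le_card_sub_one (map_zero f) h0
  · have := congrFun (congrArg f^[n] (isPeriodicPt_minimalPeriod f (E.state a 0))) ⟨0, hE⟩
    rwa [← iterate_add_apply, ha.iterate_tupleSucc, ha.iterate_tupleSucc] at this

end CommRing

theorem IsSolution.exists_periodic_le_prod {ι : Type*} [Fintype ι] {R : ι → Type*}
    [∀ i, CommRing (R i)] [∀ i, Fintype (R i)] [∀ i, Nontrivial (R i)]
    {E : LinearRecurrence (∀ i, R i)} {a : ℕ → ∀ i, R i} (ha : E.IsSolution a)
    (hE : 0 < E.order) (hc : IsUnit (E.coeffs ⟨0, hE⟩)) :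
    ∃ m, 0 < m ∧ m ≤ ∏ i, (Fintype.card (R i) ^ E.order - 1) ∧ Periodic a m := by
  have := fun i => (ha.map (Pi.evalRingHom R i)).exists_periodic_le hE (hc.map _)
  choose m hm hmle hper using this
  refine ⟨∏ i, m i, prod_pos fun i _ => hm i, prod_le_prod' fun i _ => hmle i,
    fun n => funext fun i => ?_⟩
  obtain ⟨t, ht⟩ := dvd_prod_of_mem m (mem_univ i)
  rw [ht, mul_comm]
  exact (hper i).nat_mul t n

end LinearRecurrence

theorem Finset.prod_sub_one_lt_prod_sub_one {ι : Type*} {s : Finset ι} {f : ι → ℕ}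
    (hs : 1 < #s) (hf : ∀ i ∈ s, 2 ≤ f i) : ∏ i ∈ s, (f i - 1) < (∏ i ∈ s, f i) - 1 := by
  classical
  obtain ⟨a, ha⟩ := card_pos.mp (zero_lt_one.trans hs)
  obtain ⟨b, hb⟩ : (s.erase a).Nonempty := card_pos.mp (by rw [card_erase_of_mem ha]; omega)
  set P := ∏ i ∈ s.erase a, f i
  have hP : 2 ≤ P := (hf b (mem_of_mem_erase hb)).trans <|
    single_le_prod' (fun i hi => (one_le_two.trans (hf i (mem_of_mem_erase hi)))) hb
  have hfa := hf a ha
  calc ∏ i ∈ s, (f i - 1) = (f a - 1) * ∏ i ∈ s.erase a, (f i - 1) := (mul_prod_erase s _ ha).symm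
    _ ≤ (f a - 1) * P := Nat.mul_le_mul_left _ (prod_le_prod' fun i _ => Nat.sub_le _ _)
    _ = f a * P - P := Nat.sub_one_mul _ _
    _ < f a * P - 1 := by have := Nat.le_mul_of_pos_left P (by omega : 0 < f a); omega
    _ = (∏ i ∈ s, f i) - 1 := by rw [mul_prod_erase s _ ha]

section

variable {K L : Type*}

theorem LinearRecurrence.isSolution_apply_pow [CommRing K] [Ring L] [Algebra K L]
    (T : L →ₗ[K] K) {α : L} {P : K[X]} {k : ℕ} (hP : P.Monic) (hdeg : P.natDegree = k)
    (hα : aeval α P = 0) :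
    (⟨k, fun i => -P.coeff i⟩ : LinearRecurrence K).IsSolution fun n => T (α ^ n) := by
  have hαk : α ^ k = -∑ i ∈ range k, P.coeff i • α ^ i := by
    rwa [aeval_eq_sum_range, hdeg, sum_range_succ, ← hdeg, hP.coeff_natDegree, one_smul,
      add_comm, hdeg, ← eq_neg_iff_add_eq_zero] at hα
  intro n
  show T (α ^ (n + k)) = ∑ i : Fin k, -P.coeff i * T (α ^ (n + i))
  rw [pow_add, hαk, mul_neg, mul_sum, map_neg, map_sum, ← sum_neg_distrib,
    Fin.sum_univ_eq_sum_range (fun i => -P.coeff i * T (α ^ (n + i)))]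
  refine sum_congr rfl fun i _ => ?_
  rw [mul_smul_comm, map_smul, smul_eq_mul, pow_add, neg_mul]

variable [Field L]

theorem exists_pow_eq_of_forall_mem_zpowers {G : Type*} [GroupWithZero G] [Finite G] {g : Gˣ}
    (hg : ∀ x, x ∈ Subgroup.zpowers g) {x : G} (hx : x ≠ 0) : ∃ n : ℕ, (g : G) ^ n = x := by
  obtain ⟨n, hn⟩ := mem_powers_iff_mem_zpowers.mpr (hg (Units.mk0 x hx))
  exact ⟨n, by simpa using congrArg Units.val hn⟩

theorem IntermediateField.adjoin_simple_eq_top_of_forall_pow [Field K] [Algebra K L] {α : L}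
    (hα : ∀ x ≠ 0, ∃ n : ℕ, α ^ n = x) : K⟮α⟯ = ⊤ := by
  refine eq_top_iff.mpr fun x _ => ?_
  obtain rfl | hx := eq_or_ne x 0
  · exact zero_mem _
  · obtain ⟨n, rfl⟩ := hα x hx
    exact pow_mem (mem_adjoin_simple_self K α) n

theorem pow_eq_one_of_periodic_apply_pow [CommRing K] [Algebra K L] {T : L →ₗ[K] K} (hT : T ≠ 0)
    {α : L} (hα : ∀ x ≠ 0, ∃ n : ℕ, α ^ n = x) {m : ℕ} (hm : Periodic (fun n => T (α ^ n)) m) :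
    α ^ m = 1 := by
  by_contra h
  refine hT (LinearMap.ext fun x => ?_)
  obtain rfl | hx := eq_or_ne x 0
  · exact map_zero T
  obtain ⟨n, hn⟩ := hα (x / (α ^ m - 1)) (div_ne_zero hx (sub_ne_zero.mpr h))
  have hx' : x = α ^ (n + m) - α ^ n := by
    rw [pow_add, ← mul_sub_one, hn, div_mul_cancel₀ _ (sub_ne_zero.mpr h)]
  rw [hx', map_sub, sub_eq_zero.mpr (hm n), LinearMap.zero_apply]

theorem isLeast_period_apply_pow [Finite L] [CommRing K] [Algebra K L] {T : L →ₗ[K] K}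
    (hT : T ≠ 0) {g : Lˣ} (hg : ∀ x, x ∈ Subgroup.zpowers g) :
    IsLeast {m | 0 < m ∧ Periodic (fun n => T ((g : L) ^ n)) m} (Nat.card L - 1) := by
  have hord : orderOf (g : L) = Nat.card L - 1 := by
    rw [orderOf_units, orderOf_eq_card_of_forall_mem_zpowers hg, Nat.card_units]
  refine ⟨⟨Nat.sub_pos_of_lt Finite.one_lt_card, fun n => ?_⟩, fun m ⟨hm, hper⟩ => ?_⟩
  · simp only [pow_add, ← hord, pow_orderOf_eq_one, mul_one]
  · rw [← hord]
    exact Nat.le_of_dvd hm (orderOf_dvd_of_pow_eq_one <| pow_eq_one_of_periodic_apply_pow hT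
      (fun _ hx => exists_pow_eq_of_forall_mem_zpowers hg hx) hper)

end

theorem exists_isLeast_period_card_pow_sub_one (K : Type*) [Field K] [Fintype K] {k : ℕ}
    (hk : 0 < k) : ∃ (c : Fin k → K) (a : ℕ → K), IsUnit (c ⟨0, hk⟩) ∧
      (⟨k, c⟩ : LinearRecurrence K).IsSolution a ∧
      IsLeast {m | 0 < m ∧ Periodic a m} (Fintype.card K ^ k - 1) := by
  have : NeZero k := ⟨hk.ne'⟩
  obtain ⟨p, _⟩ := CharP.exists K
  have := Fact.mk (CharP.char_is_prime K p)
  let L := FiniteField.Extension K p k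
  obtain ⟨g, hg⟩ := IsCyclic.exists_generator (α := Lˣ)
  have hint := IsIntegral.of_finite K (g : L)
  have hdeg : (minpoly K (g : L)).natDegree = k := by
    rw [← adjoin.finrank hint, adjoin_simple_eq_top_of_forall_pow
      (fun _ hx => exists_pow_eq_of_forall_mem_zpowers hg hx), finrank_top',
      FiniteField.finrank_extension]
  refine ⟨_, _, ?_, LinearRecurrence.isSolution_apply_pow (Algebra.trace K L) (minpoly.monic hint)
    hdeg (minpoly.aeval K _), ?_⟩
  · exact (neg_ne_zero.mpr (minpoly.coeff_zero_ne_zero hint g.ne_zero)).isUnit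
  · rw [← Nat.card_eq_fintype_card, ← FiniteField.natCard_extension K p k]
    exact isLeast_period_apply_pow (Algebra.trace_ne_zero K L) hg


theorem stmt_19_general (r k : ℕ) (hk : 0 < k)
    (F : Fin r → Type*) [∀ i, Field (F i)] [∀ i, Fintype (F i)] :
    (∀ (c : Fin k → (∀ i, F i)) (a : ℕ → (∀ i, F i)),
        IsUnit (c ⟨0, hk⟩) →
        (∀ n, a (n + k) = ∑ i : Fin k, c i * a (n + i.1)) →
        ∀ ρ : ℕ, IsLeast {m : ℕ | 0 < m ∧ ∀ n : ℕ, a (n + m) = a n} ρ →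
          ρ ≤ ∏ i : Fin r, (Fintype.card (F i) ^ k - 1)) ∧
    (1 < r →
      ∏ i : Fin r, (Fintype.card (F i) ^ k - 1) <
        Fintype.card (∀ i, F i) ^ k - 1) ∧
    ((∃ (c : Fin k → (∀ i, F i)) (a : ℕ → (∀ i, F i)),
        IsUnit (c ⟨0, hk⟩) ∧
        (∀ n, a (n + k) = ∑ i : Fin k, c i * a (n + i.1)) ∧
        IsLeast {m : ℕ | 0 < m ∧ ∀ n : ℕ, a (n + m) = a n}
          (Fintype.card (∀ i, F i) ^ k - 1)) ↔ r = 1) := by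
  have hbound : ∀ (c : Fin k → ∀ i, F i) a, IsUnit (c ⟨0, hk⟩) →
      (⟨k, c⟩ : LinearRecurrence _).IsSolution a →
      ∀ ρ, IsLeast {m | 0 < m ∧ Periodic a m} ρ → ρ ≤ ∏ i, (Fintype.card (F i) ^ k - 1) :=
    fun c a hc ha ρ hρ => by
      obtain ⟨m, hm, hmle, hper⟩ := LinearRecurrence.IsSolution.exists_periodic_le_prod ha hk hc
      exact (hρ.2 ⟨hm, hper⟩).trans hmle
  have hlt : 1 < r → ∏ i, (Fintype.card (F i) ^ k - 1) < Fintype.card (∀ i, F i) ^ k - 1 :=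
    fun hr => by
      rw [Fintype.card_pi, ← prod_pow]
      exact prod_sub_one_lt_prod_sub_one (by simpa using hr)
        fun i _ => Fintype.one_lt_card.trans_le (Nat.le_self_pow hk.ne' _)
  refine ⟨hbound, hlt, fun ⟨c, a, hc, ha, hρ⟩ => ?_, ?_⟩
  · by_contra hr1
    rcases Nat.lt_or_gt_of_ne hr1 with hr0 | hr
    · obtain rfl : r = 0 := by omega
      simpa using hρ.1.1
    · exact (hbound c a hc ha _ hρ).not_gt (hlt hr)
  · rintro rfl
    obtain ⟨c, a, hc, ha, hρ⟩ := exists_isLeast_period_card_pow_sub_one (F 0) hk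
    let e := (RingEquiv.piUnique F).symm
    refine ⟨e ∘ c, e ∘ a, hc.map e, ha.map e.toRingHom, ?_⟩
    rw [Fintype.card_congr (RingEquiv.piUnique F).toEquiv]
    simpa [e.injective.eq_iff] using hρ

/-- Over `R = F_{q_1} ⊕ ... ⊕ F_{q_r}`: every sequence satisfying a degree-`k`
linear recurrence with unit lowest coefficient has period at most
`∏ (q_i ^ k - 1)`; if `r > 1` this bound is strictly less than `|R|^k - 1`;
and the maximum period `|R|^k - 1` is achieved iff `r = 1` (`R` is a field). -/
theorem stmt_19 (r k : ℕ) (hr : 0 < r) (hk : 0 < k)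
    (F : Fin r → Type*) [∀ i, Field (F i)] [∀ i, Fintype (F i)] :
    (∀ (c : Fin k → (∀ i, F i)) (a : ℕ → (∀ i, F i)),
        IsUnit (c ⟨0, hk⟩) →
        (∀ n, a (n + k) = ∑ i : Fin k, c i * a (n + i.1)) →
        ∀ ρ : ℕ, IsLeast {m : ℕ | 0 < m ∧ ∀ n : ℕ, a (n + m) = a n} ρ →
          ρ ≤ ∏ i : Fin r, (Fintype.card (F i) ^ k - 1)) ∧
    (1 < r →
      ∏ i : Fin r, (Fintype.card (F i) ^ k - 1) <
        Fintype.card (∀ i, F i) ^ k - 1) ∧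
    ((∃ (c : Fin k → (∀ i, F i)) (a : ℕ → (∀ i, F i)),
        IsUnit (c ⟨0, hk⟩) ∧
        (∀ n, a (n + k) = ∑ i : Fin k, c i * a (n + i.1)) ∧
        IsLeast {m : ℕ | 0 < m ∧ ∀ n : ℕ, a (n + m) = a n}
          (Fintype.card (∀ i, F i) ^ k - 1)) ↔ r = 1) :=
  stmt_19_general r k hk F
end
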